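/- arXiv:1501.03579 — 2 statements merged into one kernel-verified Lean document; each statement's English description precedes it below -/
import Mathlib

section
/- Fix 0 < η < η' with η' sufficiently small, set λ = 1/e + η and ℓ = ⌊1/η'⌋, and let N_{η'} be the number of (λ,1)-light paths of length ℓ in SMF_n. Then P(N_{η'} ≥ 2·E[N_{η'}]) → 0 as n → ∞. -/
open MeasureTheory ProbabilityTheory Real Filter

noncomputable section

/-- The total weight of the path `p = (p 0, p 1, …, p m)` (a sequence of `m+1` distinct
vertices) under edge weights `W` on the complete graph on `Fin n`. -/
def pathWeight {n : ℕ} (W : Sym2 (Fin n) → ℝ) {m : ℕ} (p : Fin (m + 1) → Fin n) : ℝ :=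
  ∑ i : Fin m, W s(p i.castSucc, p i.succ)

/-- The number of `(lam, 1)`-light paths of length `ℓ`, i.e. self-avoiding paths of length `ℓ`
whose total weight is at most `lam · ℓ − √ℓ`, for edge weights `W`. -/
def lightPathCount (n ℓ : ℕ) (lam : ℝ) (W : Sym2 (Fin n) → ℝ) : ℕ :=
  Nat.card {p : Fin (ℓ + 1) → Fin n // Function.Injective p ∧
    pathWeight W p ≤ lam * ℓ - Real.sqrt ℓ}

/-!
Second-moment method. Let `c = λℓ - √ℓ > 0` and write the count as `N = ∑ₚ 1[A p]` over injective
paths `p`, where `A p` is the event that `p` has weight at most `c`. The event `A p` contains the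
event that each of the `ℓ` edges of `p` has weight at most `c / ℓ`, so `P (A p) ≳ n^(-ℓ)`, and
there are `≳ n^(ℓ+1)` paths: `E N ≳ n`. Events of edge-disjoint paths are independent, so only
pairs `(p, q)` sharing an edge contribute to `Var N`, each with
`P (A p ∩ A q) ≤ (c/n)^|E(p) ∪ E(q)|`. A path `q` sharing `k ≥ 1` edges with `p` has at least
`k + 1` of its vertices in `p`, so there are `O(n^(ℓ-k))` such `q`, and `Var N = O(n)`.
Chebyshev's inequality gives `P (N ≥ 2 E N) ≤ Var N / (E N)² = O(1/n)`.
-/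

section SecondMoment

variable {Ω ι : Type*} [MeasurableSpace Ω] {μ : Measure Ω}

lemma memLp_indicator_one [IsFiniteMeasure μ] {A : Set Ω} (hA : MeasurableSet A) :
    MemLp (A.indicator (1 : Ω → ℝ)) 2 μ :=
  memLp_indicator_const 2 hA 1 (.inr (measure_ne_top _ _))

lemma covariance_indicator_one [IsProbabilityMeasure μ] {A B : Set Ω} (hA : MeasurableSet A)
    (hB : MeasurableSet B) :
    cov[A.indicator (1 : Ω → ℝ), B.indicator 1; μ] = μ.real (A ∩ B) - μ.real A * μ.real B := by
  rw [covariance_eq_sub (memLp_indicator_one hA) (memLp_indicator_one hB),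
    ← Set.inter_indicator_one,
    integral_indicator_one (hA.inter hB), integral_indicator_one hA, integral_indicator_one hB]

lemma integral_sum_indicator_one [IsFiniteMeasure μ] (s : Finset ι) {A : ι → Set Ω}
    (hA : ∀ i, MeasurableSet (A i)) :
    ∫ ω, ∑ i ∈ s, (A i).indicator (1 : Ω → ℝ) ω ∂μ = ∑ i ∈ s, μ.real (A i) := by
  rw [integral_finsetSum _ fun i _ => (integrable_const 1).indicator (hA i)]
  exact Finset.sum_congr rfl fun i _ => integral_indicator_one (hA i)

lemma variance_sum_indicator_one_le [IsProbabilityMeasure μ] (s : Finset ι) {A : ι → Set Ω}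
    (hA : ∀ i, MeasurableSet (A i)) (R : ι → ι → Prop) [DecidableRel R]
    (hindep : ∀ i ∈ s, ∀ j ∈ s, ¬ R i j → μ (A i ∩ A j) = μ (A i) * μ (A j)) :
    Var[fun ω => ∑ i ∈ s, (A i).indicator (1 : Ω → ℝ) ω; μ]
      ≤ ∑ i ∈ s, ∑ j ∈ s with R i j, μ.real (A i ∩ A j) := by
  rw [variance_fun_sum' fun i _ => memLp_indicator_one (hA i)]
  refine Finset.sum_le_sum fun i hi => ?_
  rw [Finset.sum_filter]
  refine Finset.sum_le_sum fun j hj => ?_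
  rw [covariance_indicator_one (hA i) (hA j)]
  split_ifs with hR
  · exact sub_le_self _ (by positivity)
  · rw [measureReal_def, measureReal_def, measureReal_def, hindep i hi j hj hR,
      ENNReal.toReal_mul, sub_self]

lemma measure_two_mul_integral_le_le [IsFiniteMeasure μ] {X : Ω → ℝ} (hX : MemLp X 2 μ)
    (hpos : 0 < μ[X]) :
    μ {ω | 2 * μ[X] ≤ X ω} ≤ ENNReal.ofReal (Var[X; μ] / μ[X] ^ 2) := by
  refine (measure_mono fun ω (hω : 2 * μ[X] ≤ X ω) => ?_).trans
    (meas_ge_le_variance_div_sq hX hpos)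
  show μ[X] ≤ |X ω - μ[X]|
  exact (le_abs_self _).trans' (by linarith)

end SecondMoment

section ExponentialWeights

variable {Ω ι : Type*} [MeasurableSpace Ω] {P : Measure Ω} {r : ℝ}

lemma measureReal_setOf_le_of_map_eq_expMeasure {X : Ω → ℝ} (hX : Measurable X) (hr : 0 < r)
    (hlaw : P.map X = expMeasure r) {t : ℝ} (ht : 0 ≤ t) :
    P.real {ω | X ω ≤ t} = 1 - exp (-(r * t)) := by
  have := isProbabilityMeasure_expMeasure hr
  have hcdf := cdf_expMeasure_eq hr t
  rwa [if_pos ht, cdf_eq_real, ← hlaw, map_measureReal_apply hX measurableSet_Iic] at hcdf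

lemma ae_nonneg_of_map_eq_expMeasure [IsFiniteMeasure P] {X : Ω → ℝ} (hX : Measurable X)
    (hr : 0 < r) (hlaw : P.map X = expMeasure r) : ∀ᵐ ω ∂P, 0 ≤ X ω := by
  have h0 : P.real {ω | X ω ≤ 0} = 0 := by
    rw [measureReal_setOf_le_of_map_eq_expMeasure hX hr hlaw le_rfl]
    simp
  rw [ae_iff]
  refine measure_mono_null (fun ω (hω : ¬ 0 ≤ X ω) => (not_le.1 hω).le) ?_
  exact (measureReal_eq_zero_iff (measure_ne_top _ _)).1 h0

lemma measureReal_forall_mem_le [IsProbabilityMeasure P] {W : ι → Ω → ℝ}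
    (hW : ∀ e, Measurable (W e)) (hind : iIndepFun W P) (hr : 0 < r)
    (hlaw : ∀ e, P.map (W e) = expMeasure r) (S : Finset ι) {t : ℝ} (ht : 0 ≤ t) :
    P.real {ω | ∀ e ∈ S, W e ω ≤ t} = (1 - exp (-(r * t))) ^ S.card := by
  have hset : {ω | ∀ e ∈ S, W e ω ≤ t} = ⋂ e ∈ S, W e ⁻¹' Set.Iic t := by
    ext ω; simp
  rw [hset, measureReal_def, hind.meas_biInter fun e _ => ⟨_, measurableSet_Iic, rfl⟩,
    ENNReal.toReal_prod, ← Finset.prod_const]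
  exact Finset.prod_congr rfl fun e _ =>
    measureReal_setOf_le_of_map_eq_expMeasure (hW e) hr (hlaw e) ht

lemma mul_exp_neg_le_one_sub_exp_neg (y : ℝ) : y * exp (-y) ≤ 1 - exp (-y) := by
  have := add_one_le_exp y
  have hpos := exp_pos (-y)
  have : exp y * exp (-y) = 1 := by rw [← exp_add, add_neg_cancel, exp_zero]
  nlinarith

lemma mul_exp_neg_div_le_one_sub_exp_neg {n : ℕ} {t : ℝ} (ht : 0 ≤ t) (hn : 0 < n) :
    t * exp (-t) / n ≤ 1 - exp (-(1 / n * t)) := by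
  have hn1 : (1 : ℝ) ≤ n := by exact_mod_cast hn
  have hy : 1 / n * t ≤ t := by
    rw [one_div_mul_eq_div]
    exact div_le_self ht hn1
  calc t * exp (-t) / n = 1 / n * t * exp (-t) := by ring
    _ ≤ 1 / n * t * exp (-(1 / n * t)) := by gcongr
    _ ≤ 1 - exp (-(1 / n * t)) := mul_exp_neg_le_one_sub_exp_neg _

end ExponentialWeights

namespace LightPaths

open Finset Function

variable {n ℓ : ℕ}

def pathEdge (p : Fin (ℓ + 1) → Fin n) (i : Fin ℓ) : Sym2 (Fin n) := s(p i.castSucc, p i.succ)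

def pathEdges (p : Fin (ℓ + 1) → Fin n) : Finset (Sym2 (Fin n)) := univ.image (pathEdge p)

lemma pathEdge_mem_pathEdges (p : Fin (ℓ + 1) → Fin n) (i : Fin ℓ) :
    pathEdge p i ∈ pathEdges p :=
  mem_image_of_mem _ (mem_univ i)

lemma pathEdge_injective {p : Fin (ℓ + 1) → Fin n} (hp : Injective p) :
    Injective (pathEdge p) := by
  intro i j h
  rcases Sym2.eq_iff.1 h with ⟨h₁, -⟩ | ⟨h₁, h₂⟩
  · exact Fin.castSucc_injective _ (hp h₁)
  · have := congrArg Fin.val (hp h₁)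
    have := congrArg Fin.val (hp h₂)
    simp only [Fin.val_castSucc, Fin.val_succ] at *
    omega

lemma card_pathEdges {p : Fin (ℓ + 1) → Fin n} (hp : Injective p) : #(pathEdges p) = ℓ := by
  rw [pathEdges, card_image_of_injective _ (pathEdge_injective hp), card_univ, Fintype.card_fin]

lemma endpoints_mem_image_of_pathEdge_mem {p q : Fin (ℓ + 1) → Fin n} {i : Fin ℓ}
    (h : pathEdge q i ∈ pathEdges p) :
    q i.castSucc ∈ univ.image p ∧ q i.succ ∈ univ.image p := by
  obtain ⟨j, -, hj⟩ := mem_image.1 h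
  rcases Sym2.eq_iff.1 hj with ⟨h₁, h₂⟩ | ⟨h₁, h₂⟩
  · exact ⟨h₁ ▸ mem_image_of_mem _ (mem_univ _), h₂ ▸ mem_image_of_mem _ (mem_univ _)⟩
  · exact ⟨h₂ ▸ mem_image_of_mem _ (mem_univ _), h₁ ▸ mem_image_of_mem _ (mem_univ _)⟩

def sharedEdgeIndices (p q : Fin (ℓ + 1) → Fin n) : Finset (Fin ℓ) :=
  univ.filter fun i => pathEdge q i ∈ pathEdges p

lemma pathEdges_inter_eq_image (p q : Fin (ℓ + 1) → Fin n) :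
    pathEdges p ∩ pathEdges q = (sharedEdgeIndices p q).image (pathEdge q) := by
  ext e
  simp only [pathEdges, sharedEdgeIndices, mem_inter, mem_image, mem_filter, mem_univ,
    true_and]
  constructor
  · rintro ⟨he, i, rfl⟩
    exact ⟨i, he, rfl⟩
  · rintro ⟨i, hi, rfl⟩
    exact ⟨hi, i, rfl⟩

lemma card_inter_pathEdges_le (p q : Fin (ℓ + 1) → Fin n) :
    #(pathEdges p ∩ pathEdges q) ≤ #(sharedEdgeIndices p q) :=
  pathEdges_inter_eq_image p q ▸ card_image_le

def overlappingPaths (p : Fin (ℓ + 1) → Fin n) : Finset (Fin (ℓ + 1) → Fin n) :=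
  {q | ¬ Disjoint (pathEdges p) (pathEdges q)}

lemma mem_overlappingPaths {p q : Fin (ℓ + 1) → Fin n} :
    q ∈ overlappingPaths p ↔ (sharedEdgeIndices p q).Nonempty := by
  rw [overlappingPaths, mem_filter, not_disjoint_iff_nonempty_inter, pathEdges_inter_eq_image,
    image_nonempty, and_iff_right (mem_univ q)]

lemma card_lt_card_image_castSucc_union_image_succ {T : Finset (Fin ℓ)} (hT : T.Nonempty) :
    #T < #(T.image Fin.castSucc ∪ T.image Fin.succ) := by
  rw [← card_image_of_injective T (Fin.succ_injective ℓ)]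
  refine card_lt_card ⟨subset_union_right, fun h => ?_⟩
  obtain ⟨j, hj, hjm⟩ := mem_image.1
    (h (mem_union_left _ (mem_image_of_mem Fin.castSucc (T.min'_mem hT))))
  have := T.min'_le j hj
  have := congrArg Fin.val hjm
  simp only [Fin.val_castSucc, Fin.val_succ] at *
  rw [Fin.le_def] at *
  omega

lemma card_sharedEdgeIndices_superset_le (hn : 0 < n) (p : Fin (ℓ + 1) → Fin n)
    {T : Finset (Fin ℓ)} (hT : T.Nonempty) :
    #{q | T ⊆ sharedEdgeIndices p q} ≤ (ℓ + 1) ^ (ℓ + 1) * n ^ (ℓ - #T) := by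
  set I := T.image Fin.castSucc ∪ T.image Fin.succ
  set V := univ.image p
  have hsub : ({q | T ⊆ sharedEdgeIndices p q} : Finset (Fin (ℓ + 1) → Fin n)) ⊆
      Fintype.piFinset fun j => if j ∈ I then V else univ := by
    intro q hq
    simp only [mem_filter, mem_univ, true_and] at hq
    simp only [Fintype.mem_piFinset]
    intro j
    split_ifs with hj
    · rcases mem_union.1 hj with hj | hj <;> obtain ⟨i, hi, rfl⟩ := mem_image.1 hj
      · exact (endpoints_mem_image_of_pathEdge_mem (mem_filter.1 (hq hi)).2).1
      · exact (endpoints_mem_image_of_pathEdge_mem (mem_filter.1 (hq hi)).2).2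
    · exact mem_univ _
  have hI : #T < #I := card_lt_card_image_castSucc_union_image_succ hT
  have hV : #V ≤ ℓ + 1 := card_image_le.trans (by simp)
  have hIle : #I ≤ ℓ + 1 := card_le_univ I |>.trans (by simp)
  calc #{q | T ⊆ sharedEdgeIndices p q}
      ≤ ∏ j, #(if j ∈ I then V else univ) := (card_le_card hsub).trans (by simp)
    _ = #V ^ #I * n ^ (ℓ + 1 - #I) := by
      simp only [apply_ite card, card_univ, Fintype.card_fin]
      rw [prod_ite, prod_const, prod_const, filter_mem_eq_inter, univ_inter, filter_not,
        filter_mem_eq_inter, univ_inter, ← compl_eq_univ_sdiff, card_compl, Fintype.card_fin]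
    _ ≤ (ℓ + 1) ^ (ℓ + 1) * n ^ (ℓ - #T) :=
      Nat.mul_le_mul ((Nat.pow_le_pow_left hV _).trans (Nat.pow_le_pow_right ℓ.succ_pos hIle))
        (Nat.pow_le_pow_right hn (by omega))

lemma sum_pow_card_inter_pathEdges_le (hn : 0 < n) (p : Fin (ℓ + 1) → Fin n) :
    ∑ q ∈ overlappingPaths p, n ^ #(pathEdges p ∩ pathEdges q)
      ≤ 2 ^ ℓ * (ℓ + 1) ^ (ℓ + 1) * n ^ ℓ := by
  have hfiber (T : Finset (Fin ℓ)) :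
      ∑ q ∈ overlappingPaths p with sharedEdgeIndices p q = T, n ^ #(sharedEdgeIndices p q)
        ≤ (ℓ + 1) ^ (ℓ + 1) * n ^ ℓ := by
    rcases T.eq_empty_or_nonempty with rfl | hT
    · refine (sum_eq_zero fun q hq => ?_).trans_le (Nat.zero_le _)
      obtain ⟨hq, hqT⟩ := mem_filter.1 hq
      exact absurd hqT (mem_overlappingPaths.1 hq).ne_empty
    calc ∑ q ∈ overlappingPaths p with sharedEdgeIndices p q = T, n ^ #(sharedEdgeIndices p q)
        ≤ ∑ q : Fin (ℓ + 1) → Fin n with T ⊆ sharedEdgeIndices p q, n ^ #T := by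
          refine (sum_le_sum fun q hq => le_of_eq ?_).trans (sum_le_sum_of_subset ?_)
          · rw [(mem_filter.1 hq).2]
          · intro q hq
            simp only [mem_filter, mem_univ, true_and] at hq ⊢
            exact hq.2.ge
      _ ≤ (ℓ + 1) ^ (ℓ + 1) * n ^ (ℓ - #T) * n ^ #T := by
          rw [sum_const, smul_eq_mul]
          exact Nat.mul_le_mul_right _ (card_sharedEdgeIndices_superset_le hn p hT)
      _ = (ℓ + 1) ^ (ℓ + 1) * n ^ ℓ := by
          rw [mul_assoc, ← pow_add, Nat.sub_add_cancel (card_le_univ T |>.trans (by simp))]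
  calc ∑ q ∈ overlappingPaths p, n ^ #(pathEdges p ∩ pathEdges q)
      ≤ ∑ q ∈ overlappingPaths p, n ^ #(sharedEdgeIndices p q) :=
        sum_le_sum fun q _ => Nat.pow_le_pow_right hn (card_inter_pathEdges_le p q)
    _ = ∑ T, ∑ q ∈ overlappingPaths p with sharedEdgeIndices p q = T,
          n ^ #(sharedEdgeIndices p q) :=
        (sum_fiberwise_of_maps_to (fun _ _ => mem_univ _) _).symm
    _ ≤ ∑ _T : Finset (Fin ℓ), (ℓ + 1) ^ (ℓ + 1) * n ^ ℓ := sum_le_sum fun T _ => hfiber T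
    _ = 2 ^ ℓ * (ℓ + 1) ^ (ℓ + 1) * n ^ ℓ := by
        rw [sum_const, card_univ, Fintype.card_finset, Fintype.card_fin, smul_eq_mul, mul_assoc]

def injectivePaths (n ℓ : ℕ) : Finset (Fin (ℓ + 1) → Fin n) := {p | Injective p}

lemma card_injectivePaths (n ℓ : ℕ) : #(injectivePaths n ℓ) = n.descFactorial (ℓ + 1) := by
  rw [injectivePaths, ← Fintype.card_subtype,
    Fintype.card_congr (Equiv.subtypeInjectiveEquivEmbedding _ _), Fintype.card_embedding_eq,
    Fintype.card_fin, Fintype.card_fin]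

lemma half_pow_le_card_injectivePaths (hn : 2 * ℓ < n) :
    ((n : ℝ) / 2) ^ (ℓ + 1) ≤ #(injectivePaths n ℓ) := by
  have hdesc : (n - ℓ) ^ (ℓ + 1) ≤ n.descFactorial (ℓ + 1) := by
    simpa using Nat.pow_sub_le_descFactorial n (ℓ + 1)
  rw [card_injectivePaths]
  calc ((n : ℝ) / 2) ^ (ℓ + 1) ≤ ((n - ℓ : ℕ) : ℝ) ^ (ℓ + 1) := by
        gcongr
        rw [Nat.cast_sub (by omega), le_sub_iff_add_le]
        have : (2 * ℓ + 1 : ℝ) ≤ n := by exact_mod_cast hn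
        linarith
    _ ≤ n.descFactorial (ℓ + 1) := by exact_mod_cast hdesc

lemma le_pathWeight_of_mem_pathEdges {w : Sym2 (Fin n) → ℝ} (hw : ∀ e, 0 ≤ w e)
    {p : Fin (ℓ + 1) → Fin n} {e : Sym2 (Fin n)} (he : e ∈ pathEdges p) : w e ≤ pathWeight w p := by
  obtain ⟨i, -, rfl⟩ := mem_image.1 he
  exact single_le_sum (f := fun i => w (pathEdge p i)) (fun j _ => hw _) (mem_univ i)

lemma pathWeight_le_of_forall_mem_pathEdges_le {w : Sym2 (Fin n) → ℝ} {p : Fin (ℓ + 1) → Fin n}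
    {t : ℝ} (h : ∀ e ∈ pathEdges p, w e ≤ t) : pathWeight w p ≤ ℓ * t := by
  calc pathWeight w p ≤ ∑ _i : Fin ℓ, t :=
        sum_le_sum fun i _ => h _ (pathEdge_mem_pathEdges p i)
    _ = ℓ * t := by simp

variable {Ω : Type*} {W : Sym2 (Fin n) → Ω → ℝ} {c lam : ℝ}

def lightEvent (W : Sym2 (Fin n) → Ω → ℝ) (c : ℝ) (p : Fin (ℓ + 1) → Fin n) : Set Ω :=
  {ω | pathWeight (fun e => W e ω) p ≤ c}

lemma lightPathCount_eq_sum_indicator (lam : ℝ) (W : Sym2 (Fin n) → Ω → ℝ) (ω : Ω) :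
    (lightPathCount n ℓ lam (fun e => W e ω) : ℝ) =
      ∑ p ∈ injectivePaths n ℓ, (lightEvent W (lam * ℓ - √ℓ) p).indicator 1 ω := by
  classical
  rw [lightPathCount, Nat.card_eq_fintype_card, Fintype.card_subtype, injectivePaths,
    sum_indicator_eq_sum_filter, filter_filter, Pi.one_def, sum_const, nsmul_one]
  rfl

lemma lightEvent_eq_preimage (W : Sym2 (Fin n) → Ω → ℝ) (c : ℝ) (p : Fin (ℓ + 1) → Fin n) :
    lightEvent W c p = (fun ω (e : pathEdges p) => W e ω) ⁻¹'
      {v | ∑ i, v ⟨pathEdge p i, pathEdge_mem_pathEdges p i⟩ ≤ c} :=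
  rfl

variable [MeasurableSpace Ω] {P : Measure Ω} {r : ℝ}

lemma measurableSet_lightEvent (hW : ∀ e, Measurable (W e)) (c : ℝ) (p : Fin (ℓ + 1) → Fin n) :
    MeasurableSet (lightEvent W c p) :=
  measurableSet_le (Finset.measurable_sum _ fun _ _ => hW _) measurable_const

lemma measure_lightEvent_inter_eq_mul (hW : ∀ e, Measurable (W e)) (hind : iIndepFun W P)
    {p q : Fin (ℓ + 1) → Fin n} (hpq : Disjoint (pathEdges p) (pathEdges q)) :
    P (lightEvent W c p ∩ lightEvent W c q) = P (lightEvent W c p) * P (lightEvent W c q) := by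
  rw [lightEvent_eq_preimage, lightEvent_eq_preimage]
  exact (hind.indepFun_finset _ _ hpq hW).measure_inter_preimage_eq_mul _ _
    (measurableSet_le (Finset.measurable_sum _ fun _ _ => measurable_pi_apply _) measurable_const)
    (measurableSet_le (Finset.measurable_sum _ fun _ _ => measurable_pi_apply _) measurable_const)

lemma measure_two_mul_integral_le_lightPathCount_congr {W' : Sym2 (Fin n) → Ω → ℝ}
    (h : ∀ e, W e =ᵐ[P] W' e) :
    P {ω | 2 * ∫ ω', (lightPathCount n ℓ lam (fun e => W e ω') : ℝ) ∂P
        ≤ lightPathCount n ℓ lam (fun e => W e ω)} =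
      P {ω | 2 * ∫ ω', (lightPathCount n ℓ lam (fun e => W' e ω') : ℝ) ∂P
        ≤ lightPathCount n ℓ lam (fun e => W' e ω)} := by
  have hae : ∀ᵐ ω ∂P, (fun e => W e ω) = fun e => W' e ω :=
    (ae_all_iff.2 h).mono fun ω hω => funext hω
  have hint : ∫ ω', (lightPathCount n ℓ lam (fun e => W e ω') : ℝ) ∂P =
      ∫ ω', (lightPathCount n ℓ lam (fun e => W' e ω') : ℝ) ∂P :=
    integral_congr_ae (hae.mono fun ω hω => by simp only [hω])
  refine measure_congr (hae.mono fun ω hω => ?_)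
  change (_ ≤ _) = (_ ≤ _)
  rw [hint, hω]

variable [IsProbabilityMeasure P]

lemma measureReal_lightEvent_inter_le (hW : ∀ e, Measurable (W e)) (hind : iIndepFun W P)
    (hr : 0 < r) (hlaw : ∀ e, P.map (W e) = expMeasure r) (hc : 0 ≤ c)
    (p q : Fin (ℓ + 1) → Fin n) :
    P.real (lightEvent W c p ∩ lightEvent W c q) ≤ (r * c) ^ #(pathEdges p ∪ pathEdges q) := by
  have hsub : (lightEvent W c p ∩ lightEvent W c q : Set Ω) ≤ᵐ[P]
      ({ω | ∀ e ∈ pathEdges p ∪ pathEdges q, W e ω ≤ c} : Set Ω) := by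
    filter_upwards [ae_all_iff.2 fun e => ae_nonneg_of_map_eq_expMeasure (hW e) hr (hlaw e)]
      with ω hω ⟨hp, hq⟩ e he
    rcases mem_union.1 he with he | he
    · exact (le_pathWeight_of_mem_pathEdges hω he).trans hp
    · exact (le_pathWeight_of_mem_pathEdges hω he).trans hq
  calc P.real (lightEvent W c p ∩ lightEvent W c q)
      ≤ P.real {ω | ∀ e ∈ pathEdges p ∪ pathEdges q, W e ω ≤ c} :=
        ENNReal.toReal_mono (measure_ne_top _ _) (measure_mono_ae hsub)
    _ = (1 - exp (-(r * c))) ^ #(pathEdges p ∪ pathEdges q) :=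
        measureReal_forall_mem_le hW hind hr hlaw _ hc
    _ ≤ (r * c) ^ #(pathEdges p ∪ pathEdges q) := by
        gcongr
        · exact sub_nonneg.2 (exp_le_one_iff.2 (by simp; positivity))
        · linarith [add_one_le_exp (-(r * c))]

lemma le_measureReal_lightEvent (hW : ∀ e, Measurable (W e)) (hind : iIndepFun W P)
    (hr : 0 < r) (hlaw : ∀ e, P.map (W e) = expMeasure r) (hc : 0 ≤ c)
    (p : Fin (ℓ + 1) → Fin n) :
    (1 - exp (-(r * (c / ℓ)))) ^ ℓ ≤ P.real (lightEvent W c p) := by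
  have hsub : {ω | ∀ e ∈ pathEdges p, W e ω ≤ c / ℓ} ⊆ lightEvent W c p := fun ω hω =>
    (pathWeight_le_of_forall_mem_pathEdges_le hω).trans (by
      rcases eq_or_ne (ℓ : ℝ) 0 with h | h
      · simpa [h] using hc
      · rw [mul_div_cancel₀ _ h])
  calc (1 - exp (-(r * (c / ℓ)))) ^ ℓ ≤ (1 - exp (-(r * (c / ℓ)))) ^ #(pathEdges p) :=
        pow_le_pow_of_le_one (sub_nonneg.2 (exp_le_one_iff.2 (by simp; positivity)))
          (sub_le_self _ (exp_pos _).le) (card_image_le.trans (by simp))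
    _ = P.real {ω | ∀ e ∈ pathEdges p, W e ω ≤ c / ℓ} :=
        (measureReal_forall_mem_le hW hind hr hlaw _ (by positivity)).symm
    _ ≤ P.real (lightEvent W c p) := measureReal_mono hsub

-- Each edge has `n P(W e ≤ c / ℓ) ≥ κ = (c / ℓ) e^(-c/ℓ)`, and there are at least
-- `(n / 2)^(ℓ + 1)` injective paths.
def meanConst (ℓ : ℕ) (c : ℝ) : ℝ := (c / ℓ * exp (-(c / ℓ))) ^ ℓ / 2 ^ (ℓ + 1)

-- `max c 1 ^ (2ℓ)` bounds `c ^ #(E(p) ∪ E(q))`; the rest is `sum_pow_card_inter_pathEdges_le`.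
def varianceConst (ℓ : ℕ) (c : ℝ) : ℝ := max c 1 ^ (2 * ℓ) * (2 ^ ℓ * (ℓ + 1) ^ (ℓ + 1))

lemma meanConst_mul_le_sum_measureReal_lightEvent (hW : ∀ e, Measurable (W e))
    (hind : iIndepFun W P) (hlaw : ∀ e, P.map (W e) = expMeasure (1 / n)) (hc : 0 ≤ c)
    (hn : 2 * ℓ < n) :
    meanConst ℓ c * n ≤ ∑ p ∈ injectivePaths n ℓ, P.real (lightEvent W c p) := by
  have hn0 : 0 < n := by omega
  have hnR : (0 : ℝ) < n := by exact_mod_cast hn0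
  set κ := c / ℓ * exp (-(c / ℓ))
  have hsingle (p : Fin (ℓ + 1) → Fin n) : (κ / n) ^ ℓ ≤ P.real (lightEvent W c p) :=
    (pow_le_pow_left₀ (by positivity)
      (mul_exp_neg_div_le_one_sub_exp_neg (by positivity) hn0) ℓ).trans
      (le_measureReal_lightEvent hW hind (by positivity) hlaw hc p)
  calc meanConst ℓ c * n = ((n : ℝ) / 2) ^ (ℓ + 1) * (κ / n) ^ ℓ := by
        rw [show meanConst ℓ c = κ ^ ℓ / 2 ^ (ℓ + 1) from rfl, div_pow, div_pow, pow_succ,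
          pow_succ]
        field_simp
    _ ≤ #(injectivePaths n ℓ) * (κ / n) ^ ℓ := by
        gcongr
        exact half_pow_le_card_injectivePaths hn
    _ = ∑ p ∈ injectivePaths n ℓ, (κ / n) ^ ℓ := by rw [sum_const, nsmul_eq_mul]
    _ ≤ ∑ p ∈ injectivePaths n ℓ, P.real (lightEvent W c p) := sum_le_sum fun p _ => hsingle p

lemma measureReal_lightEvent_inter_le_of_injective (hW : ∀ e, Measurable (W e))
    (hind : iIndepFun W P) (hlaw : ∀ e, P.map (W e) = expMeasure (1 / n)) (hc : 0 ≤ c)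
    (hn : 0 < n) {p q : Fin (ℓ + 1) → Fin n} (hp : Injective p) (hq : Injective q) :
    P.real (lightEvent W c p ∩ lightEvent W c q) ≤
      max c 1 ^ (2 * ℓ) / n ^ (2 * ℓ) * n ^ #(pathEdges p ∩ pathEdges q) := by
  have hnR : (0 : ℝ) < n := by exact_mod_cast hn
  have hcard : #(pathEdges p ∪ pathEdges q) + #(pathEdges p ∩ pathEdges q) = 2 * ℓ := by
    rw [card_union_add_card_inter, card_pathEdges hp, card_pathEdges hq, two_mul]
  calc P.real (lightEvent W c p ∩ lightEvent W c q)
      ≤ (1 / n * c) ^ #(pathEdges p ∪ pathEdges q) :=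
        measureReal_lightEvent_inter_le hW hind (by positivity) hlaw hc p q
    _ = c ^ #(pathEdges p ∪ pathEdges q) / n ^ (2 * ℓ) * n ^ #(pathEdges p ∩ pathEdges q) := by
        rw [← hcard, pow_add, mul_pow, one_div_pow]
        field_simp
    _ ≤ max c 1 ^ (2 * ℓ) / n ^ (2 * ℓ) * n ^ #(pathEdges p ∩ pathEdges q) := by
        gcongr
        exact (pow_le_pow_left₀ hc (le_max_left c 1) _).trans
          (pow_le_pow_right₀ (le_max_right c 1) (by omega))

lemma variance_sum_indicator_lightEvent_le (hW : ∀ e, Measurable (W e)) (hind : iIndepFun W P)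
    (hlaw : ∀ e, P.map (W e) = expMeasure (1 / n)) (hc : 0 ≤ c) (hn : 0 < n) :
    Var[fun ω => ∑ p ∈ injectivePaths n ℓ, (lightEvent W c p).indicator 1 ω; P]
      ≤ varianceConst ℓ c * n := by
  have hnR : (0 : ℝ) < n := by exact_mod_cast hn
  set B : ℝ := max c 1 ^ (2 * ℓ) / n ^ (2 * ℓ) with hB
  set K : ℝ := 2 ^ ℓ * (ℓ + 1) ^ (ℓ + 1) * n ^ ℓ with hK
  have hinner (p : Fin (ℓ + 1) → Fin n) (hp : Injective p) :
      ∑ q ∈ injectivePaths n ℓ with q ∈ overlappingPaths p,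
        P.real (lightEvent W c p ∩ lightEvent W c q) ≤ B * K := by
    have hK : ∑ q ∈ overlappingPaths p, (n : ℝ) ^ #(pathEdges p ∩ pathEdges q) ≤ K := by
      rw [hK]
      exact_mod_cast sum_pow_card_inter_pathEdges_le hn p
    calc ∑ q ∈ injectivePaths n ℓ with q ∈ overlappingPaths p,
          P.real (lightEvent W c p ∩ lightEvent W c q)
        ≤ ∑ q ∈ injectivePaths n ℓ with q ∈ overlappingPaths p,
            B * n ^ #(pathEdges p ∩ pathEdges q) :=
          sum_le_sum fun q hq => measureReal_lightEvent_inter_le_of_injective hW hind hlaw hc hn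
            hp (mem_filter.1 (mem_filter.1 hq).1).2
      _ ≤ ∑ q ∈ overlappingPaths p, B * n ^ #(pathEdges p ∩ pathEdges q) :=
          sum_le_sum_of_subset_of_nonneg (fun q hq => (mem_filter.1 hq).2)
            fun _ _ _ => by positivity
      _ ≤ B * K := by
          rw [← mul_sum]
          gcongr
  calc Var[fun ω => ∑ p ∈ injectivePaths n ℓ, (lightEvent W c p).indicator 1 ω; P]
      ≤ ∑ p ∈ injectivePaths n ℓ, ∑ q ∈ injectivePaths n ℓ with q ∈ overlappingPaths p,
          P.real (lightEvent W c p ∩ lightEvent W c q) :=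
        variance_sum_indicator_one_le _ (measurableSet_lightEvent hW c) _
          fun p _ q _ h => measure_lightEvent_inter_eq_mul hW hind (by
            simpa [overlappingPaths] using h)
    _ ≤ ∑ _p : Fin (ℓ + 1) → Fin n, B * K :=
        (sum_le_sum fun p hp => hinner p (mem_filter.1 hp).2).trans
          (sum_le_sum_of_subset_of_nonneg (subset_univ _) fun _ _ _ => by positivity)
    _ = varianceConst ℓ c * n := by
        rw [sum_const, card_univ, Fintype.card_fun, Fintype.card_fin, Fintype.card_fin,
          nsmul_eq_mul, hB, hK, varianceConst]
        push_cast
        field_simp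
        ring

lemma measure_two_mul_integral_le_lightPathCount_le_of_measurable (hW : ∀ e, Measurable (W e))
    (hind : iIndepFun W P) (hlaw : ∀ e, P.map (W e) = expMeasure (1 / n)) (hℓ : 0 < ℓ)
    (hc : 0 < lam * ℓ - √ℓ) (hn : 2 * ℓ < n) :
    P {ω | 2 * ∫ ω', (lightPathCount n ℓ lam (fun e => W e ω') : ℝ) ∂P
        ≤ lightPathCount n ℓ lam (fun e => W e ω)} ≤
      ENNReal.ofReal (varianceConst ℓ (lam * ℓ - √ℓ) / meanConst ℓ (lam * ℓ - √ℓ) ^ 2 / n) := by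
  set c := lam * ℓ - √ℓ
  have hnR : (0 : ℝ) < n := by exact_mod_cast (show 0 < n by omega)
  have hE₀ : 0 < meanConst ℓ c := by unfold meanConst; positivity
  simp_rw [lightPathCount_eq_sum_indicator lam W]
  set N := fun ω => ∑ p ∈ injectivePaths n ℓ, (lightEvent W c p).indicator (1 : Ω → ℝ) ω
  have hmean : meanConst ℓ c * n ≤ P[N] := by
    rw [integral_sum_indicator_one _ (measurableSet_lightEvent hW c)]
    exact meanConst_mul_le_sum_measureReal_lightEvent hW hind hlaw hc.le hn
  have hvar : Var[N; P] ≤ varianceConst ℓ c * n :=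
    variance_sum_indicator_lightEvent_le hW hind hlaw hc.le (by omega)
  refine (measure_two_mul_integral_le_le
    (memLp_finsetSum _ fun p _ => memLp_indicator_one (measurableSet_lightEvent hW c p))
    ((mul_pos hE₀ hnR).trans_le hmean)).trans (ENNReal.ofReal_le_ofReal ?_)
  calc Var[N; P] / P[N] ^ 2 ≤ varianceConst ℓ c * n / (meanConst ℓ c * n) ^ 2 :=
        div_le_div₀ (by unfold varianceConst; positivity) hvar (by positivity) (by gcongr)
    _ = varianceConst ℓ c / meanConst ℓ c ^ 2 / n := by field_simp

lemma measure_two_mul_integral_le_lightPathCount_le (hind : iIndepFun W P)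
    (hlaw : ∀ e, P.map (W e) = expMeasure (1 / n)) (hℓ : 0 < ℓ)
    (hc : 0 < lam * ℓ - √ℓ) (hn : 2 * ℓ < n) :
    P {ω | 2 * ∫ ω', (lightPathCount n ℓ lam (fun e => W e ω') : ℝ) ∂P
        ≤ lightPathCount n ℓ lam (fun e => W e ω)} ≤
      ENNReal.ofReal (varianceConst ℓ (lam * ℓ - √ℓ) / meanConst ℓ (lam * ℓ - √ℓ) ^ 2 / n) := by
  have hr : (0 : ℝ) < 1 / n := one_div_pos.2 (Nat.cast_pos.2 (by omega))
  have hmeas (e : Sym2 (Fin n)) : AEMeasurable (W e) P := .of_map_ne_zero <| by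
    rw [hlaw e]
    exact (isProbabilityMeasure_expMeasure hr).ne_zero
  rw [measure_two_mul_integral_le_lightPathCount_congr fun e => (hmeas e).ae_eq_mk]
  refine measure_two_mul_integral_le_lightPathCount_le_of_measurable
    (fun e => (hmeas e).measurable_mk) (hind.congr fun e => (hmeas e).ae_eq_mk)
    (fun e => ?_) hℓ hc hn
  rw [← Measure.map_congr (hmeas e).ae_eq_mk, hlaw e]

end LightPaths

/-- **Concentration of the number of short `(λ,1)`-light paths.**
There is an absolute constant `η₀ > 0` such that for all `0 < η < η' < η₀`, with
`λ = 1/e + η`, `ℓ = ⌊1/η'⌋` and `N_{η'}` the number of `(λ,1)`-light paths of length `ℓ`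
in the stochastic mean-field model, one has `P(N_{η'} ≥ 2·E[N_{η'}]) → 0` as `n → ∞`. -/
theorem light_path_count_not_large :
    ∃ η₀ : ℝ, 0 < η₀ ∧
      ∀ η η' : ℝ, 0 < η → η < η' → η' < η₀ →
      ∀ (Ω : ℕ → Type) (mΩ : ∀ n, MeasurableSpace (Ω n)) (P : ∀ n, Measure (Ω n)),
        (∀ n, IsProbabilityMeasure (P n)) →
      ∀ W : ∀ n, Sym2 (Fin n) → Ω n → ℝ,
        (∀ n, iIndepFun (W n) (P n)) →
        (∀ n e, Measure.map (W n e) (P n) = expMeasure (1 / n)) →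
      Tendsto
        (fun n => P n {ω |
          2 * ∫ ω', (lightPathCount n ⌊1 / η'⌋₊ (1 / Real.exp 1 + η)
              (fun e => W n e ω') : ℝ) ∂(P n)
            ≤ (lightPathCount n ⌊1 / η'⌋₊ (1 / Real.exp 1 + η)
              (fun e => W n e ω) : ℝ)})
        atTop (nhds 0) := by
  refine ⟨1 / 9, by norm_num, fun η η' hη hηη' hη' Ω _ P hP W hind hlaw => ?_⟩
  set ℓ := ⌊1 / η'⌋₊
  have hℓ : 9 ≤ ℓ := Nat.le_floor <| by
    rw [le_div_iff₀ (hη.trans hηη')]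
    norm_num
    linarith
  have hℓR : (9 : ℝ) ≤ ℓ := by exact_mod_cast hℓ
  have hlam : 1 / 3 < 1 / exp 1 + η := by
    have : 1 / 3 < 1 / exp 1 := one_div_lt_one_div_of_lt (exp_pos 1) (by linarith [exp_one_lt_d9])
    linarith
  -- `η₀ = 1/9` forces `ℓ ≥ 9`, and `λ > 1/e > 1/3` then gives `λℓ > ℓ/3 ≥ √ℓ`.
  have hc : 0 < (1 / exp 1 + η) * ℓ - √ℓ := by
    have : (ℓ : ℝ) / 3 < (1 / exp 1 + η) * ℓ := by nlinarith
    exact sub_pos.2 ((sqrt_lt' (by positivity)).2 (by nlinarith))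
  have hlim (C : ℝ) : Tendsto (fun n : ℕ => ENNReal.ofReal (C / n)) atTop (nhds 0) := by
    simpa using ENNReal.tendsto_ofReal (tendsto_const_div_atTop_nhds_zero_nat C)
  exact tendsto_of_tendsto_of_tendsto_of_le_of_le' tendsto_const_nhds (hlim _)
    (.of_forall fun _ => zero_le) ((eventually_gt_atTop (2 * ℓ)).mono
      fun n hn => LightPaths.measure_two_mul_integral_le_lightPathCount_le (hind n) (hlaw n)
        (by omega) hc hn)
end
end

section
/- Let π and π′ be self-avoiding paths such that the graph π ∩ π′ (with edge set E(π) ∩ E(π′)) is nonempty and has exactly k + 1 connected components. Then there exists a set of k edges of π ∪ π′ whose removal (keeping the vertex set unchanged) leaves an acyclic graph. -/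
open Finset

noncomputable section

/-- The vertex set of the path `p = (p 0, …, p m)`, as a finset. -/
def pathVerts {V : Type*} [DecidableEq V] {m : ℕ} (p : Fin (m + 1) → V) : Finset V :=
  Finset.image p Finset.univ

/-- The edge set of the path `p = (p 0, …, p m)` (the `m` consecutive pairs), as a finset. -/
def pathEdges {V : Type*} [DecidableEq V] {m : ℕ} (p : Fin (m + 1) → V) : Finset (Sym2 V) :=
  Finset.image (fun i : Fin m => s(p i.castSucc, p i.succ)) Finset.univ

/-- The number of connected components of the intersection graph of two paths: the graph whose
vertex set is `V(π) ∩ V(π′)` and whose edge set is `E(π) ∩ E(π′)`. -/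
def interComponents {V : Type*} [Fintype V] [DecidableEq V] {m m' : ℕ}
    (p : Fin (m + 1) → V) (q : Fin (m' + 1) → V) : ℕ :=
  Nat.card ((SimpleGraph.fromEdgeSet
      (↑(pathEdges p ∩ pathEdges q) : Set (Sym2 V))).induce
      (↑(pathVerts p ∩ pathVerts q) : Set V)).ConnectedComponent

/-!
Let `G` be the graph with edge set `E(π) ∪ E(π′)`. Deleting the edges of `G` outside a spanning
forest leaves a forest and deletes `|E(G)| - |V| + c(G)` edges, where `c` counts connected
components. Every vertex outside `V(π) ∪ V(π′)` is isolated and the rest of `G` is connected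
through the common vertex, so this number is `|E(π) ∪ E(π′)| - |V(π) ∪ V(π′)| + 1`; by
inclusion–exclusion it equals `|V(π) ∩ V(π′)| - |E(π) ∩ E(π′)| - 1`. The intersection graph is a
subgraph of the path `π`, hence a forest, so this is its number of components minus one, i.e. `k`.
-/

open SimpleGraph

namespace SimpleGraph
variable {V : Type*} {G : SimpleGraph V}

theorem edgeFinset_fromEdgeSet {s : Finset (Sym2 V)}
    [Fintype (fromEdgeSet (s : Set (Sym2 V))).edgeSet] (hs : ∀ e ∈ s, ¬e.IsDiag) :
    (fromEdgeSet (s : Set (Sym2 V))).edgeFinset = s := by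
  ext e
  simp only [mem_edgeFinset, edgeSet_fromEdgeSet, Set.mem_sdiff, mem_coe]
  exact ⟨And.left, fun he => ⟨he, hs e he⟩⟩

/-- Each component of a forest is a tree, with one vertex more than edges. -/
theorem IsAcyclic.card_edgeFinset_add_card_connectedComponent [Fintype V] [DecidableRel G.Adj]
    (hG : G.IsAcyclic) : #G.edgeFinset + Nat.card G.ConnectedComponent = Fintype.card V := by
  classical
  have := Fintype.ofFinite G.ConnectedComponent
  -- On edges the choice of endpoint does not matter.
  let edgeComp (e : Sym2 V) : G.ConnectedComponent := G.connectedComponentMk e.out.1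
  have hedges (c : G.ConnectedComponent) :
      {e ∈ G.edgeFinset | edgeComp e = c} = G.edgeFinset ∩ c.supp.toFinset.sym2 := by
    ext e
    induction e using Sym2.ind with
    | _ u v =>
    simp only [mem_filter, mem_inter, mem_edgeFinset, mem_edgeSet, mem_sym2_iff, Sym2.mem_iff,
      Set.mem_toFinset, ConnectedComponent.mem_supp_iff, and_congr_right_iff]
    intro huv
    have hcomp := ConnectedComponent.sound huv.reachable
    rcases Sym2.mem_iff.mp (Sym2.out_fst_mem s(u, v)) with h | h <;>
      simp only [edgeComp, h] <;> grind
  have hcomponent (c : G.ConnectedComponent) :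
      #{e ∈ G.edgeFinset | edgeComp e = c} + 1 = #{v | G.connectedComponentMk v = c} := by
    have htree : (G.induce c.supp).IsTree := hG.isTree_connectedComponent c
    rw [hedges, ← map_edgeFinset_induce, card_map, htree.card_edgeFinset, ← Set.toFinset_card]
    congr 1
    ext v
    simp [ConnectedComponent.mem_supp_iff]
  calc #G.edgeFinset + Nat.card G.ConnectedComponent
      = ∑ c, (#{e ∈ G.edgeFinset | edgeComp e = c} + 1) := by
        rw [sum_add_distrib, ← card_eq_sum_card_fiberwise (f := edgeComp) (t := univ) (by simp)]
        simp
    _ = ∑ c, #{v | G.connectedComponentMk v = c} := sum_congr rfl fun c _ => hcomponent c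
    _ = Fintype.card V := (card_eq_sum_card_fiberwise (by simp)).symm

/-- Take `F` to be the edges outside a spanning forest. -/
theorem exists_isAcyclic_deleteEdges [Fintype V] [DecidableEq V] [Fintype G.edgeSet] :
    ∃ F ⊆ G.edgeFinset, (G.deleteEdges F).IsAcyclic ∧
      #F + Fintype.card V = #G.edgeFinset + Nat.card G.ConnectedComponent := by
  classical
  obtain ⟨H, hHG, hH, hreach⟩ := G.exists_isAcyclic_reachable_eq_le
  have hHG' : H.edgeFinset ⊆ G.edgeFinset := edgeFinset_subset_edgeFinset.mpr hHG
  refine ⟨G.edgeFinset \ H.edgeFinset, sdiff_subset, ?_, ?_⟩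
  · convert hH
    rw [← edgeSet_inj, edgeSet_deleteEdges, coe_sdiff, coe_edgeFinset, coe_edgeFinset,
      Set.sdiff_sdiff_cancel_left (edgeSet_subset_edgeSet.mpr hHG)]
  · have hcomp : Nat.card H.ConnectedComponent = Nat.card G.ConnectedComponent := by
      rw [ConnectedComponent, ConnectedComponent, hreach]
    rw [card_sdiff_of_subset hHG', ← hH.card_edgeFinset_add_card_connectedComponent, hcomp]
    have := card_le_card hHG'
    omega

theorem card_connectedComponent_add_card_of_support_subset [Fintype V] {A : Finset V}
    (hA : A.Nonempty) (hsupp : G.support ⊆ A) (hreach : ∀ v ∈ A, ∀ w ∈ A, G.Reachable v w) :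
    Nat.card G.ConnectedComponent + #A = Fintype.card V + 1 := by
  classical
  have := Fintype.ofFinite G.ConnectedComponent
  obtain ⟨x, hx⟩ := hA
  have hisolated : ∀ v ∉ A, ∀ w, G.Reachable v w → v = w := by
    rintro v hv w ⟨W⟩
    by_contra hvw
    exact hv (hsupp ⟨_, W.adj_snd (W.not_nil_of_ne hvw)⟩)
  have huniv : (univ : Finset G.ConnectedComponent) =
      insert (G.connectedComponentMk x) (Aᶜ.image G.connectedComponentMk) := by
    refine (eq_univ_of_forall fun c => ?_).symm
    induction c using ConnectedComponent.ind with
    | _ v =>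
    by_cases hv : v ∈ A
    · exact mem_insert.mpr (.inl (ConnectedComponent.sound (hreach v hv x hx)))
    · exact mem_insert_of_mem (mem_image_of_mem _ (mem_compl.mpr hv))
  have hx' : G.connectedComponentMk x ∉ Aᶜ.image G.connectedComponentMk := by
    simp only [mem_image, mem_compl, not_exists, not_and]
    intro v hv hvx
    exact hv (hisolated v hv x (ConnectedComponent.exact hvx) ▸ hx)
  have hinj : Set.InjOn G.connectedComponentMk (Aᶜ : Finset V) := fun v hv w _ hvw =>
    hisolated v (mem_compl.mp hv) w (ConnectedComponent.exact hvw)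
  rw [Nat.card_eq_fintype_card, ← card_univ, huniv, card_insert_of_notMem hx',
    card_image_of_injOn hinj, card_compl]
  have := card_le_univ A
  omega

end SimpleGraph

section Paths
variable {V : Type*} [DecidableEq V] {m m' : ℕ} {p : Fin (m + 1) → V} {q : Fin (m' + 1) → V}

lemma mem_pathEdges {e : Sym2 V} :
    e ∈ pathEdges p ↔ ∃ i : Fin m, s(p i.castSucc, p i.succ) = e := by
  simp [pathEdges]

lemma card_pathVerts (hp : p.Injective) : #(pathVerts p) = m + 1 := by
  simp [pathVerts, card_image_of_injective _ hp]

lemma card_pathEdges (hp : p.Injective) : #(pathEdges p) = m := by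
  rw [pathEdges, card_image_of_injective, card_univ, Fintype.card_fin]
  intro i j hij
  rcases Sym2.eq_iff.mp hij with ⟨h, -⟩ | ⟨h₁, h₂⟩
  · exact Fin.castSucc_injective _ (hp h)
  · have h₁ := congrArg Fin.val (hp h₁)
    have h₂ := congrArg Fin.val (hp h₂)
    simp only [Fin.val_castSucc, Fin.val_succ] at h₁ h₂
    omega

lemma mem_pathVerts_of_mem_pathEdges {e : Sym2 V} {v : V} (he : e ∈ pathEdges p) (hv : v ∈ e) :
    v ∈ pathVerts p := by
  obtain ⟨i, rfl⟩ := mem_pathEdges.mp he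
  rcases Sym2.mem_iff.mp hv with rfl | rfl <;> simp [pathVerts]

lemma not_isDiag_of_mem_pathEdges (hp : p.Injective) {e : Sym2 V} (he : e ∈ pathEdges p) :
    ¬e.IsDiag := by
  obtain ⟨i, rfl⟩ := mem_pathEdges.mp he
  exact Sym2.mk_isDiag_iff.not.mpr (hp.ne Fin.castSucc_lt_succ.ne)

lemma fromEdgeSet_pathEdges_adj (hp : p.Injective) (i : Fin m) :
    (fromEdgeSet (pathEdges p : Set (Sym2 V))).Adj (p i.castSucc) (p i.succ) :=
  (fromEdgeSet_adj _).mpr ⟨mem_pathEdges.mpr ⟨i, rfl⟩, hp.ne Fin.castSucc_lt_succ.ne⟩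

lemma reachable_of_mem_pathVerts (hp : p.Injective) {v w : V} (hv : v ∈ pathVerts p)
    (hw : w ∈ pathVerts p) : (fromEdgeSet (pathEdges p : Set (Sym2 V))).Reachable v w := by
  suffices h : ∀ i, (fromEdgeSet (pathEdges p : Set (Sym2 V))).Reachable (p 0) (p i) by
    obtain ⟨i, -, rfl⟩ := mem_image.mp hv
    obtain ⟨j, -, rfl⟩ := mem_image.mp hw
    exact (h i).symm.trans (h j)
  intro i
  induction i using Fin.induction with
  | zero => rfl
  | succ i ih => exact ih.trans (fromEdgeSet_pathEdges_adj hp i).reachable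

/-- Every edge `s(p i, p (i + 1))` is a bridge: a walk avoiding it would have to leave
`p '' [0, i]` along some other edge `s(p j, p (j + 1))`, forcing `j = i`. -/
lemma isAcyclic_fromEdgeSet_pathEdges (hp : p.Injective) :
    (fromEdgeSet (pathEdges p : Set (Sym2 V))).IsAcyclic := by
  rw [isAcyclic_iff_forall_adj_isBridge]
  intro v w hvw
  obtain ⟨i, hi⟩ := mem_pathEdges.mp ((fromEdgeSet_adj _).mp hvw).1
  rw [← hi, isBridge_iff]
  rintro ⟨W⟩
  obtain ⟨d, -, hin, hout⟩ := W.exists_boundary_dart (p '' Set.Iic i.castSucc)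
    (Set.mem_image_of_mem p Set.self_mem_Iic) (by simp [hp.mem_set_image])
  have hadj := d.adj
  rw [deleteEdges_adj, fromEdgeSet_adj, Set.mem_singleton_iff] at hadj
  obtain ⟨⟨hdE, -⟩, hdi⟩ := hadj
  obtain ⟨j, hj⟩ := mem_pathEdges.mp hdE
  rcases Sym2.eq_iff.mp hj with ⟨h₁, h₂⟩ | ⟨h₁, h₂⟩
  · rw [← h₁, hp.mem_set_image, Set.mem_Iic, Fin.le_def] at hin
    rw [← h₂, hp.mem_set_image, Set.mem_Iic, Fin.le_def] at hout
    simp only [Fin.val_castSucc, Fin.val_succ] at hin hout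
    exact hdi (by rw [← hj, Fin.ext (by omega : (j : ℕ) = i)])
  · rw [← h₂, hp.mem_set_image, Set.mem_Iic, Fin.le_def] at hin
    rw [← h₁, hp.mem_set_image, Set.mem_Iic, Fin.le_def] at hout
    simp only [Fin.val_castSucc, Fin.val_succ] at hin hout
    omega

lemma card_connectedComponent_add_card_pathVerts_union [Fintype V] (hp : p.Injective)
    (hq : q.Injective) (hne : (pathVerts p ∩ pathVerts q).Nonempty) :
    Nat.card (fromEdgeSet (↑(pathEdges p ∪ pathEdges q) : Set (Sym2 V))).ConnectedComponent +
      #(pathVerts p ∪ pathVerts q) = Fintype.card V + 1 := by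
  obtain ⟨x, hx⟩ := hne
  have hreach : ∀ v ∈ pathVerts p ∪ pathVerts q,
      (fromEdgeSet (↑(pathEdges p ∪ pathEdges q) : Set (Sym2 V))).Reachable v x := by
    intro v hv
    rcases mem_union.mp hv with hv | hv
    · exact (reachable_of_mem_pathVerts hp hv (mem_inter.mp hx).1).mono
        (fromEdgeSet_mono (by simp))
    · exact (reachable_of_mem_pathVerts hq hv (mem_inter.mp hx).2).mono
        (fromEdgeSet_mono (by simp))
  refine card_connectedComponent_add_card_of_support_subset
    ⟨x, mem_union_left _ (mem_inter.mp hx).1⟩ ?_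
    fun v hv w hw => (hreach v hv).trans (hreach w hw).symm
  rintro v ⟨w, hvw⟩
  rcases mem_union.mp ((fromEdgeSet_adj _).mp hvw).1 with he | he
  · exact mem_union_left _ (mem_pathVerts_of_mem_pathEdges he (Sym2.mem_mk_left v w))
  · exact mem_union_right _ (mem_pathVerts_of_mem_pathEdges he (Sym2.mem_mk_left v w))

lemma card_pathEdges_inter_add_interComponents [Fintype V] (hp : p.Injective) :
    #(pathEdges p ∩ pathEdges q) + interComponents p q = #(pathVerts p ∩ pathVerts q) := by
  classical
  set I := (fromEdgeSet (↑(pathEdges p ∩ pathEdges q) : Set (Sym2 V))).induce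
    (↑(pathVerts p ∩ pathVerts q) : Set V)
  have hacyclic : I.IsAcyclic :=
    ((isAcyclic_fromEdgeSet_pathEdges hp).anti (fromEdgeSet_mono (by simp))).induce _
  have hsupp : (fromEdgeSet (↑(pathEdges p ∩ pathEdges q) : Set (Sym2 V))).support ⊆
      ↑(pathVerts p ∩ pathVerts q) := by
    rintro v ⟨w, hvw⟩
    obtain ⟨hep, heq⟩ := mem_inter.mp ((fromEdgeSet_adj _).mp hvw).1
    exact mem_inter.mpr ⟨mem_pathVerts_of_mem_pathEdges hep (Sym2.mem_mk_left v w),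
      mem_pathVerts_of_mem_pathEdges heq (Sym2.mem_mk_left v w)⟩
  have hedges : #I.edgeFinset = #(pathEdges p ∩ pathEdges q) := by
    calc #I.edgeFinset
        = #(fromEdgeSet (↑(pathEdges p ∩ pathEdges q) : Set (Sym2 V))).edgeFinset := by
          convert card_edgeFinset_induce_of_support_subset hsupp
      _ = #(pathEdges p ∩ pathEdges q) := by
          rw [edgeFinset_fromEdgeSet fun e he => not_isDiag_of_mem_pathEdges hp (mem_inter.mp he).1]
  have hforest := hacyclic.card_edgeFinset_add_card_connectedComponent
  rwa [hedges, ← Nat.card_eq_fintype_card, Nat.card_coe_set_eq, Set.ncard_coe_finset] at hforest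

end Paths

/-- **Making the union of two paths acyclic by deleting few edges.**
Let `π, π′` be self-avoiding paths whose (vertex-wise and edge-wise) intersection is nonempty
and has exactly `k + 1` connected components. Then there is a set of `k` edges of `π ∪ π′`
whose removal (keeping the vertex set unchanged) leaves an acyclic graph. -/
theorem union_of_paths_acyclic_after_removing_edges
    {V : Type*} [Fintype V] [DecidableEq V] {m m' : ℕ}
    (p : Fin (m + 1) → V) (q : Fin (m' + 1) → V)
    (hp : Function.Injective p) (hq : Function.Injective q)
    (hne : (pathVerts p ∩ pathVerts q).Nonempty)
    (k : ℕ) (hcomp : interComponents p q = k + 1) :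
    ∃ F : Finset (Sym2 V), F ⊆ pathEdges p ∪ pathEdges q ∧ F.card = k ∧
      (SimpleGraph.fromEdgeSet
        ((↑(pathEdges p ∪ pathEdges q) : Set (Sym2 V)) \ ↑F)).IsAcyclic := by
  classical
  set G := fromEdgeSet (↑(pathEdges p ∪ pathEdges q) : Set (Sym2 V))
  have hGE : G.edgeFinset = pathEdges p ∪ pathEdges q := edgeFinset_fromEdgeSet fun e he =>
    (mem_union.mp he).elim (not_isDiag_of_mem_pathEdges hp) (not_isDiag_of_mem_pathEdges hq)
  obtain ⟨F, hFG, hacyclic, hF⟩ := G.exists_isAcyclic_deleteEdges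
  refine ⟨F, hGE ▸ hFG, ?_, by rwa [fromEdgeSet_sdiff]⟩
  have hG : Nat.card G.ConnectedComponent + #(pathVerts p ∪ pathVerts q) = Fintype.card V + 1 :=
    card_connectedComponent_add_card_pathVerts_union hp hq hne
  have hI := card_pathEdges_inter_add_interComponents (q := q) hp
  rw [hcomp] at hI
  have hE := card_union_add_card_inter (pathEdges p) (pathEdges q)
  have hV := card_union_add_card_inter (pathVerts p) (pathVerts q)
  rw [card_pathEdges hp, card_pathEdges hq] at hE
  rw [card_pathVerts hp, card_pathVerts hq] at hV
  rw [hGE] at hF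
  omega
end
end
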